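/- If r' preserves the order of r and r is non-constant (r(i) ≠ r(j) for some i, j), then for any strictly positive probability distribution π on [K], the covariance r'^T (diag(π) - π π^T) r is strictly positive. -/

import Mathlib

/-!
Since `∑ π = 1`, the quadratic form is the covariance of `r'` and `r` under `π`, which equals
`½ ∑ᵢ ∑ⱼ πᵢ πⱼ (r'ᵢ - r'ⱼ)(rᵢ - rⱼ)`. Order preservation makes every term nonnegative, and a pair
with `rᵢ ≠ rⱼ` makes its term strictly positive.
-/

open Matrix Finset

variable {ι R : Type*} [CommRing R]

theorem sum_sum_mul_mul_sub_mul_sub [Fintype ι] (w x y : ι → R) :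
    ∑ i, ∑ j, w i * w j * ((x i - x j) * (y i - y j)) =
      2 * ((∑ i, w i) * ∑ i, w i * x i * y i - (∑ i, w i * x i) * ∑ i, w i * y i) := by
  have half : ∑ i, ∑ j, w i * w j * (x i * y i - x i * y j) =
      (∑ i, w i * x i * y i) * (∑ j, w j) - (∑ i, w i * x i) * ∑ j, w j * y j := by
    simp only [sum_mul_sum, ← sum_sub_distrib]
    exact sum_congr rfl fun i _ => sum_congr rfl fun j _ => by ring
  have swapped : ∑ i, ∑ j, w i * w j * (x j * y j - x j * y i) =
      ∑ i, ∑ j, w i * w j * (x i * y i - x i * y j) := by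
    rw [sum_comm]
    simp only [mul_comm (w _) (w _)]
  calc ∑ i, ∑ j, w i * w j * ((x i - x j) * (y i - y j))
      = ∑ i, ∑ j, (w i * w j * (x i * y i - x i * y j) + w i * w j * (x j * y j - x j * y i)) :=
        sum_congr rfl fun i _ => sum_congr rfl fun j _ => by ring
    _ = 2 * ((∑ i, w i) * ∑ i, w i * x i * y i - (∑ i, w i * x i) * ∑ i, w i * y i) := by
        simp only [sum_add_distrib, swapped, half]
        ring

theorem dotProduct_diagonal_sub_vecMulVec_mulVec [Fintype ι] [DecidableEq ι] (π x y : ι → R) :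
    x ⬝ᵥ ((diagonal π - vecMulVec π π) *ᵥ y) =
      ∑ i, π i * x i * y i - (∑ i, π i * x i) * ∑ i, π i * y i := by
  rw [sub_mulVec, dotProduct_sub, vecMulVec_mulVec]
  simp only [dotProduct, mulVec_diagonal, Pi.smul_apply, MulOpposite.smul_eq_mul_unop,
    MulOpposite.unop_op, sum_mul]
  congr 1 <;> exact sum_congr rfl fun i _ => by ring

theorem mul_sub_mul_sub_pos_of_lt_imp_lt [LinearOrder R] [IsStrictOrderedRing R]
    {x y : ι → R} (hxy : ∀ i j, y i < y j → x i < x j) {i j : ι} (hij : y i ≠ y j) :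
    0 < (x i - x j) * (y i - y j) := by
  rcases hij.lt_or_gt with h | h
  · exact mul_pos_of_neg_of_neg (sub_neg.2 (hxy i j h)) (sub_neg.2 h)
  · exact mul_pos (sub_pos.2 (hxy j i h)) (sub_pos.2 h)

theorem sum_mul_sum_lt_sum_mul_sum_mul_mul [Fintype ι] [LinearOrder R] [IsStrictOrderedRing R]
    {w x y : ι → R} (hw : ∀ i, 0 < w i) (hxy : ∀ i j, y i < y j → x i < x j)
    (hy : ∃ i j, y i ≠ y j) :
    (∑ i, w i * x i) * ∑ i, w i * y i < (∑ i, w i) * ∑ i, w i * x i * y i := by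
  have hterm : ∀ i j, 0 ≤ w i * w j * ((x i - x j) * (y i - y j)) := fun i j => by
    refine mul_nonneg (mul_pos (hw i) (hw j)).le ?_
    by_cases hij : y i = y j
    · simp [hij]
    · exact (mul_sub_mul_sub_pos_of_lt_imp_lt hxy hij).le
  obtain ⟨i, j, hij⟩ := hy
  have hpos : 0 < ∑ i, ∑ j, w i * w j * ((x i - x j) * (y i - y j)) :=
    sum_pos' (fun i _ => sum_nonneg fun j _ => hterm i j) ⟨i, mem_univ i,
      sum_pos' (fun j _ => hterm i j) ⟨j, mem_univ j,
        mul_pos (mul_pos (hw i) (hw j)) (mul_sub_mul_sub_pos_of_lt_imp_lt hxy hij)⟩⟩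
  rw [sum_sum_mul_mul_sub_mul_sub] at hpos
  linarith

theorem pos_covariance_of_order_preserving {K : ℕ} (r r' π : Fin K → ℝ)
    (horder : ∀ i j, r i > r j ↔ r' i > r' j)
    (hnonconst : ∃ i j, r i ≠ r j)
    (hπ0 : ∀ i, 0 < π i) (hπ1 : ∑ i, π i = 1) :
    0 < r' ⬝ᵥ ((Matrix.diagonal π - Matrix.vecMulVec π π) *ᵥ r) := by
  have hchebyshev :=
    sum_mul_sum_lt_sum_mul_sum_mul_mul hπ0 (fun i j h => (horder j i).1 h) hnonconst
  rw [hπ1, one_mul] at hchebyshev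
  rw [dotProduct_diagonal_sub_vecMulVec_mulVec]
  exact sub_pos.2 hchebyshev
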